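/- arXiv:0912.2919 — 2 statements merged into one kernel-verified Lean document; each statement's English description precedes it below -/
import Mathlib

section
/- Let P be an increasing graph property. Any theorem for n-sequences whose hypothesis is a conjunction of P-weakly-optimal Chvátal-type conditions and whose conclusion is that the sequence is forcibly P must contain at least s(n,P) conditions, where s(n,P) is the number of sinks (maximal elements under majorization) of the P-subposet. Concretely: if a set S of P-weakly-optimal Chvátal-type conditions has the property that every graphical sequence satisfying all conditions in S is forcibly P, then for each sink π the condition C(π) belongs to S (up to equivalence), so |S| ≥ s(n,P). -/
open SimpleGraph

/-- Degree of a vertex. -/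
noncomputable def ndeg {V : Type*} (G : SimpleGraph V) (v : V) : ℕ :=
  Nat.card {u | G.Adj v u}

/-- `G` (a graph on `Fin n`) realizes the sequence `π`. -/
def RealizesF {n : ℕ} (G : SimpleGraph (Fin n)) (π : Fin n → ℕ) : Prop :=
  ∃ e : Equiv.Perm (Fin n), ∀ i, ndeg G (e i) = π i

/-- A Chvátal-type condition `d_{i_1} ≥ k_{i_1} ∨ … ∨ d_{i_r} ≥ k_{i_r}`. -/
structure ChvatalCond (n : ℕ) where
  idx : Finset (Fin n)
  bound : Fin n → ℕ
  idx_nonempty : idx.Nonempty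
  bound_mono : ∀ i ∈ idx, ∀ j ∈ idx, i ≤ j → bound i ≤ bound j
  bound_range : ∀ i ∈ idx, 1 ≤ bound i ∧ bound i ≤ n

/-- A sequence `d` satisfies a Chvátal-type condition. -/
def ChvatalCond.Sat {n : ℕ} (c : ChvatalCond n) (d : Fin n → ℕ) : Prop :=
  ∃ i ∈ c.idx, c.bound i ≤ d i

/-- `G` is edge-maximal without the (increasing) property `P`. -/
def EdgeMaxNon {n : ℕ} (P : SimpleGraph (Fin n) → Prop) (G : SimpleGraph (Fin n)) : Prop :=
  ¬ P G ∧ ∀ H, G < H → P H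

/-- `π` is a sink of the `P`-subposet: it is the (nondecreasing) degree sequence of an
edge-maximal non-`P` graph and is maximal under majorization among such sequences. -/
def IsSink (n : ℕ) (P : SimpleGraph (Fin n) → Prop) (π : Fin n → ℕ) : Prop :=
  Monotone π ∧ (∃ G, EdgeMaxNon P G ∧ RealizesF G π) ∧
    ∀ π' : Fin n → ℕ, Monotone π' → (∃ G, EdgeMaxNon P G ∧ RealizesF G π') →
      π ≤ π' → π' = π

/-- `c` is `P`-weakly-optimal: every nondecreasing `n`-sequence violating `c` is majorized
by a graphical sequence having a realization without property `P`. -/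
def WeaklyOpt (n : ℕ) (P : SimpleGraph (Fin n) → Prop) (c : ChvatalCond n) : Prop :=
  ∀ d : Fin n → ℕ, Monotone d → (∀ j, d j ≤ n - 1) → ¬ c.Sat d →
    ∃ π' : Fin n → ℕ, Monotone π' ∧ d ≤ π' ∧ ∃ G, RealizesF G π' ∧ ¬ P G

/-! A sink `π` cannot satisfy every condition of `S`, since its realizations lack `P`; pick
`c ∈ S` failing at `π`. If `d` also violates `c`, so does `d ⊔ π`, and weak optimality gives a
non-`P` graphical sequence above `d ⊔ π`. Completing its realization to an edge-maximal
non-`P` graph only raises the sorted degrees, so maximality of the sink pins that sequence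
down to `π`, and `d ≤ π`. Thus `c` fails exactly below `π`, i.e. `c` is `C(π)`; as `C(π)`
determines `π`, distinct sinks use distinct conditions of `S`. -/

open Finset in
/-- Sorting is monotone: if `t i < s i`, the `n - i` points `σ j` with `j ≥ i` and the `i + 1`
points `τ k` with `k ≤ i` must share a point `v`, and then `s i ≤ a v ≤ b v ≤ t i`. -/
theorem le_of_comp_perm {α : Type*} [LinearOrder α] {n : ℕ} {a b s t : Fin n → α}
    {σ τ : Equiv.Perm (Fin n)} (hs : Monotone s) (ht : Monotone t)
    (ha : ∀ i, a (σ i) = s i) (hb : ∀ i, b (τ i) = t i) (hab : a ≤ b) : s ≤ t := by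
  intro i
  by_contra! hlt
  have hcard : #(univ : Finset (Fin n)) <
      #((Ici i).map σ.toEmbedding) + #((Iic i).map τ.toEmbedding) := by
    simp only [card_map, Fin.card_Ici, Fin.card_Iic, card_univ, Fintype.card_fin]
    omega
  obtain ⟨v, hv⟩ := inter_nonempty_of_card_lt_card_add_card (subset_univ _) (subset_univ _) hcard
  simp only [mem_inter, mem_map_equiv, mem_Ici, mem_Iic] at hv
  refine hlt.not_ge ?_
  calc s i ≤ s (σ.symm v) := hs hv.1
    _ = a v := by rw [← ha, Equiv.apply_symm_apply]
    _ ≤ b v := hab v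
    _ = t (τ.symm v) := by rw [← hb, Equiv.apply_symm_apply]
    _ ≤ t i := ht hv.2

theorem ndeg_mono {V : Type*} [Finite V] {G H : SimpleGraph V} (h : G ≤ H) (v : V) :
    ndeg G v ≤ ndeg H v := by
  simp only [ndeg, Nat.card_coe_set_eq]
  exact Set.ncard_le_ncard (fun _ hu => h hu)

theorem ndeg_le_sub_one {n : ℕ} (G : SimpleGraph (Fin n)) (v : Fin n) : ndeg G v ≤ n - 1 := by
  have hsub : {u | G.Adj v u} ⊆ {v}ᶜ := fun u hu => (G.ne_of_adj hu).symm
  calc ndeg G v ≤ ({v}ᶜ : Set (Fin n)).ncard := by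
        rw [ndeg, Nat.card_coe_set_eq]; exact Set.ncard_le_ncard hsub
    _ = n - 1 := by rw [Set.ncard_compl, Set.ncard_singleton, Nat.card_fin]

theorem RealizesF.le_sub_one {n : ℕ} {G : SimpleGraph (Fin n)} {π : Fin n → ℕ}
    (h : RealizesF G π) (j : Fin n) : π j ≤ n - 1 := by
  obtain ⟨e, he⟩ := h
  exact he j ▸ ndeg_le_sub_one G (e j)

theorem exists_monotone_realizesF {n : ℕ} (G : SimpleGraph (Fin n)) :
    ∃ π : Fin n → ℕ, Monotone π ∧ RealizesF G π :=
  ⟨ndeg G ∘ Tuple.sort (ndeg G), Tuple.monotone_sort _, Tuple.sort (ndeg G), fun _ => rfl⟩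

theorem exists_le_edgeMaxNon {n : ℕ} {P : SimpleGraph (Fin n) → Prop} {G : SimpleGraph (Fin n)}
    (hG : ¬ P G) : ∃ H, G ≤ H ∧ EdgeMaxNon P H := by
  obtain ⟨H, ⟨hGH, hH⟩, hmax⟩ :=
    (Set.toFinite {H | G ≤ H ∧ ¬ P H}).exists_maximal ⟨G, le_rfl, hG⟩
  refine ⟨H, hGH, hH, fun H' hlt => ?_⟩
  by_contra hH'
  exact hlt.not_ge (hmax ⟨hGH.trans hlt.le, hH'⟩ hlt.le)

theorem RealizesF.le_of_le {n : ℕ} {G H : SimpleGraph (Fin n)} {π π' : Fin n → ℕ}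
    (hGH : G ≤ H) (hπ : Monotone π) (hπ' : Monotone π') (hG : RealizesF G π)
    (hH : RealizesF H π') : π ≤ π' := by
  obtain ⟨σ, hσ⟩ := hG
  obtain ⟨τ, hτ⟩ := hH
  exact le_of_comp_perm hπ hπ' hσ hτ (ndeg_mono hGH)

theorem exists_edgeMaxNon_ge {n : ℕ} {P : SimpleGraph (Fin n) → Prop}
    {G : SimpleGraph (Fin n)} {π : Fin n → ℕ} (hπ : Monotone π) (hG : RealizesF G π)
    (hP : ¬ P G) :
    ∃ π', Monotone π' ∧ π ≤ π' ∧ ∃ H, EdgeMaxNon P H ∧ RealizesF H π' := by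
  obtain ⟨H, hGH, hH⟩ := exists_le_edgeMaxNon hP
  obtain ⟨π', hπ', hHπ'⟩ := exists_monotone_realizesF H
  exact ⟨π', hπ', hG.le_of_le hGH hπ hπ' hHπ', H, hH, hHπ'⟩

theorem ChvatalCond.sat_sup_iff {n : ℕ} (c : ChvatalCond n) (d e : Fin n → ℕ) :
    c.Sat (d ⊔ e) ↔ c.Sat d ∨ c.Sat e := by
  simp only [ChvatalCond.Sat, Pi.sup_apply, le_sup_iff, ← exists_or, ← and_or_left]

namespace IsSink

variable {n : ℕ} {P : SimpleGraph (Fin n) → Prop} {π : Fin n → ℕ}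

theorem le_sub_one (hπ : IsSink n P π) (j : Fin n) : π j ≤ n - 1 :=
  let ⟨_, ⟨_, _, hG⟩, _⟩ := hπ
  hG.le_sub_one j

theorem le_of_not_sat (hπ : IsSink n P π) {c : ChvatalCond n} (hc : WeaklyOpt n P c)
    (hcπ : ¬ c.Sat π) {d : Fin n → ℕ} (hd : Monotone d) (hdn : ∀ j, d j ≤ n - 1)
    (hcd : ¬ c.Sat d) : d ≤ π := by
  have hsup : ¬ c.Sat (d ⊔ π) := by
    rw [c.sat_sup_iff]; exact not_or_intro hcd hcπ
  obtain ⟨π', hπ', hle', G, hG, hPG⟩ :=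
    hc _ (hd.sup hπ.1) (fun j => max_le (hdn j) (hπ.le_sub_one j)) hsup
  obtain ⟨π'', hπ'', hle'', hH⟩ := exists_edgeMaxNon_ge hπ' hG hPG
  have hπ''_eq : π'' = π := hπ.2.2 π'' hπ'' hH (le_sup_right.trans (hle'.trans hle''))
  exact hπ''_eq ▸ le_sup_left.trans (hle'.trans hle'')

theorem exists_mem_sat_iff (hπ : IsSink n P π) {S : Finset (ChvatalCond n)}
    (hSwo : ∀ c ∈ S, WeaklyOpt n P c)
    (hthm : ∀ d : Fin n → ℕ, Monotone d → (∀ j, d j ≤ n - 1) →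
      (∃ G, RealizesF G d) → (∀ c ∈ S, c.Sat d) → ∀ G, RealizesF G d → P G) :
    ∃ c ∈ S, ∀ d : Fin n → ℕ, Monotone d → (∀ j, d j ≤ n - 1) →
      (c.Sat d ↔ ∃ j, π j + 1 ≤ d j) := by
  obtain ⟨G, hG, hGπ⟩ := hπ.2.1
  obtain ⟨c, hcS, hcπ⟩ : ∃ c ∈ S, ¬ c.Sat π := by
    by_contra! hall
    exact hG.1 (hthm π hπ.1 hπ.le_sub_one ⟨G, hGπ⟩ hall G hGπ)
  refine ⟨c, hcS, fun d hd hdn => ⟨fun hcd => ?_, ?_⟩⟩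
  · by_contra! hdπ
    obtain ⟨i, hi, hbd⟩ := hcd
    exact hcπ ⟨i, hi, hbd.trans (Nat.le_of_lt_succ (hdπ i))⟩
  · rintro ⟨j, hj⟩
    by_contra hcd
    have : d j ≤ π j := hπ.le_of_not_sat (hSwo c hcS) hcπ hd hdn hcd j
    omega

theorem le_of_forall_iff {π' : Fin n → ℕ} (hπ' : IsSink n P π')
    (h : ∀ d : Fin n → ℕ, Monotone d → (∀ j, d j ≤ n - 1) →
      ((∃ j, π j + 1 ≤ d j) ↔ ∃ j, π' j + 1 ≤ d j)) : π' ≤ π := by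
  intro j
  by_contra! hj
  obtain ⟨k, hk⟩ := (h π' hπ'.1 hπ'.le_sub_one).1 ⟨j, hj⟩
  omega

end IsSink

theorem Set.ncard_le_ncard_of_forall_exists_rel {α β : Type*} {s : Set α} {t : Set β}
    (ht : t.Finite) {r : α → β → Prop} (hex : ∀ a ∈ s, ∃ b ∈ t, r a b)
    (huniq : ∀ a₁ ∈ s, ∀ a₂ ∈ s, ∀ b, r a₁ b → r a₂ b → a₁ = a₂) : s.ncard ≤ t.ncard := by
  choose f hft hfr using hex
  have : Finite t := ht
  rw [← Nat.card_coe_set_eq, ← Nat.card_coe_set_eq]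
  refine Nat.card_le_card_of_injective (fun a : s => (⟨f a a.2, hft a a.2⟩ : t)) ?_
  intro a₁ a₂ h
  have hf : f a₁ a₁.2 = f a₂ a₂.2 := congrArg Subtype.val h
  exact Subtype.ext (huniq a₁ a₁.2 a₂ a₂.2 _ (hfr a₁ a₁.2) (hf ▸ hfr a₂ a₂.2))

theorem stmt6_general (n : ℕ) (P : SimpleGraph (Fin n) → Prop)
    (S : Finset (ChvatalCond n))
    (hSwo : ∀ c ∈ S, WeaklyOpt n P c)
    -- the theorem: every graphical nondecreasing n-sequence satisfying all conditions
    -- in S is forcibly P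
    (hthm : ∀ d : Fin n → ℕ, Monotone d → (∀ j, d j ≤ n - 1) →
      (∃ G, RealizesF G d) → (∀ c ∈ S, c.Sat d) → ∀ G, RealizesF G d → P G) :
    -- conclusion: for every sink π, some condition of S is equivalent to C(π);
    -- consequently S contains at least as many conditions as there are sinks
    (∀ π : Fin n → ℕ, IsSink n P π → ∃ c ∈ S,
      ∀ d : Fin n → ℕ, Monotone d → (∀ j, d j ≤ n - 1) →
        (c.Sat d ↔ ∃ j, π j + 1 ≤ d j)) ∧
    {π : Fin n → ℕ | IsSink n P π}.ncard ≤ S.card := by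
  have hC := fun π (hπ : IsSink n P π) => hπ.exists_mem_sat_iff hSwo hthm
  refine ⟨hC, ?_⟩
  rw [← Set.ncard_coe_finset]
  refine Set.ncard_le_ncard_of_forall_exists_rel S.finite_toSet hC ?_
  intro π₁ hπ₁ π₂ hπ₂ c hc₁ hc₂
  have hiff : ∀ d : Fin n → ℕ, Monotone d → (∀ j, d j ≤ n - 1) →
      ((∃ j, π₁ j + 1 ≤ d j) ↔ ∃ j, π₂ j + 1 ≤ d j) := fun d hd hdn =>
    (hc₁ d hd hdn).symm.trans (hc₂ d hd hdn)
  exact le_antisymm (hπ₁.le_of_forall_iff fun d hd hdn => (hiff d hd hdn).symm)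
    (hπ₂.le_of_forall_iff hiff)

theorem stmt6 (n : ℕ) (P : SimpleGraph (Fin n) → Prop)
    (hP : ∀ G H, G ≤ H → P G → P H)
    (S : Finset (ChvatalCond n))
    (hSwo : ∀ c ∈ S, WeaklyOpt n P c)
    -- the theorem: every graphical nondecreasing n-sequence satisfying all conditions
    -- in S is forcibly P
    (hthm : ∀ d : Fin n → ℕ, Monotone d → (∀ j, d j ≤ n - 1) →
      (∃ G, RealizesF G d) → (∀ c ∈ S, c.Sat d) → ∀ G, RealizesF G d → P G) :
    -- conclusion: for every sink π, some condition of S is equivalent to C(π);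
    -- consequently S contains at least as many conditions as there are sinks
    (∀ π : Fin n → ℕ, IsSink n P π → ∃ c ∈ S,
      ∀ d : Fin n → ℕ, Monotone d → (∀ j, d j ≤ n - 1) →
        (c.Sat d ↔ ∃ j, π j + 1 ≤ d j)) ∧
    {π : Fin n → ℕ | IsSink n P π}.ncard ≤ S.card :=
  stmt6_general n P S hSwo hthm
end

section
/- Let k ≥ 2, m ≥ 2, n = m(k+1), 1 ≤ j ≤ m−1. Let π be the degree sequence of G = K_j + (K_{c_1} ∪ ... ∪ K_{c_{kj+1}}) with c_1 ≤ ... ≤ c_{kj+1} summing to n−j, and suppose the largest noncomplete degree d = c_{kj+1} + j − 1 satisfies d ≥ n − k(j+1). Then π is not majorized by the degree sequence of any graph K_i + (K_{c'_1} ∪ ... ∪ K_{c'_{ki+1}}) on n vertices with i ≥ j+1. -/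
/-- The degree multiset `(c_1+j-1)^{c_1} … (c_s+j-1)^{c_s} (n-1)^j` of the graph
`K_j + (K_{c_1} ∪ … ∪ K_{c_s})` on `n` vertices. -/
def degSeqMS (n j : ℕ) {s : ℕ} (c : Fin s → ℕ) : Multiset ℕ :=
  (∑ i : Fin s, Multiset.replicate (c i) (c i + j - 1)) + Multiset.replicate j (n - 1)

/-- The `i`-th entry (0-based) of the multiset `M` sorted nondecreasingly. -/
def sortedNth (M : Multiset ℕ) (i : ℕ) : ℕ :=
  (Multiset.sort M (· ≤ ·)).getD i 0

/-!
Compare the two sorted sequences at position `n - i - 1`, just below the `i` complete degrees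
of `π'`. In `π` at least `c_{kj+1} + j` entries are `≥ d`, and `c_{kj+1} + j > i` because
`d ≥ n - k(j+1) > i` (the `ki + 1` nonempty parts of `π'` force `i < m`), so the entry of `π`
there is `≥ d`. In `π'` each of the `ki + 1` parts has size `≥ 1`, so every noncomplete degree
`c'_l + i - 1` is `≤ n - ki - 1`, and only the `i` complete degrees exceed it; hence the entry
of `π'` there is `≤ n - ki - 1 < n - k(j+1) ≤ d`.
-/

theorem Monotone.apply_getElem_iff_le_countP {α : Type*} [Preorder α] {L : List α}
    (hL : L.Pairwise (· ≤ ·)) {p : α → Prop} [DecidablePred p] (hp : Monotone p) {l : ℕ}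
    (hl : l < L.length) : p L[l] ↔ L.length - l ≤ L.countP (fun x => decide (p x)) := by
  have hdrop := List.drop_eq_getElem_cons hl
  have hsplit : L.take l ++ L[l] :: L.drop (l + 1) = L := by rw [← hdrop, List.take_append_drop]
  obtain ⟨-, htail, hcross⟩ := List.pairwise_append.mp (hsplit ▸ hL)
  have hcount : L.countP (fun x => decide (p x)) =
      (L.take l).countP (fun x => decide (p x)) + (L.drop l).countP (fun x => decide (p x)) := by
    rw [← List.countP_append, List.take_append_drop]
  constructor
  · intro hpl
    have hall : (L.drop l).countP (fun x => decide (p x)) = (L.drop l).length := by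
      refine List.countP_eq_length.mpr fun x hx => ?_
      rw [hdrop, List.mem_cons] at hx
      rcases hx with rfl | hx
      · simpa using hpl
      · simpa using hp ((List.pairwise_cons.mp htail).1 x hx) hpl
    rw [List.length_drop] at hall
    omega
  · intro hcard
    by_contra hpl
    have hhead : (L.take l).countP (fun x => decide (p x)) = 0 :=
      List.countP_eq_zero.mpr fun x hx => by
        simpa using fun hpx => hpl (hp (hcross x hx _ List.mem_cons_self) hpx)
    have htail_le : (L.drop l).countP (fun x => decide (p x)) ≤ L.length - (l + 1) := by
      rw [hdrop, List.countP_cons, if_neg (by simpa using hpl), add_zero]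
      simpa using List.countP_le_length (l := L.drop (l + 1))
    omega

theorem Monotone.apply_sortedNth_iff_le_card_filter {M : Multiset ℕ} {p : ℕ → Prop}
    [DecidablePred p] (hp : Monotone p) {l : ℕ} (hl : l < Multiset.card M) :
    p (sortedNth M l) ↔ Multiset.card M - l ≤ Multiset.card (M.filter p) := by
  have hlen := Multiset.length_sort (s := M) (· ≤ ·)
  have hl' : l < (M.sort (· ≤ ·)).length := hlen ▸ hl
  have hcount : (M.sort (· ≤ ·)).countP (fun x => decide (p x)) = Multiset.card (M.filter p) := by
    rw [← Multiset.coe_countP, Multiset.sort_eq, Multiset.countP_eq_card_filter]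
  rw [sortedNth, List.getD_eq_getElem _ _ hl',
    hp.apply_getElem_iff_le_countP (Multiset.pairwise_sort M _) hl', hlen, hcount]

lemma card_degSeqMS (n j : ℕ) {s : ℕ} (c : Fin s → ℕ) :
    Multiset.card (degSeqMS n j c) = (∑ i, c i) + j := by
  simp [degSeqMS]

lemma add_le_card_filter_degSeqMS {n j s : ℕ} (c : Fin s → ℕ) (t : Fin s) (ht : c t + j ≤ n) :
    c t + j ≤ Multiset.card ((degSeqMS n j c).filter (c t + j - 1 ≤ ·)) := by
  have hsub : Multiset.replicate (c t) (c t + j - 1) + Multiset.replicate j (n - 1) ≤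
      (degSeqMS n j c).filter (c t + j - 1 ≤ ·) := by
    refine Multiset.le_filter.mpr ⟨?_, ?_⟩
    · exact add_le_add_left (Finset.single_le_sum (f := fun x => Multiset.replicate (c x) _)
        (fun _ _ => Multiset.zero_le _) (Finset.mem_univ t)) _
    · intro a ha
      rcases Multiset.mem_add.mp ha with ha | ha
      · rw [Multiset.eq_of_mem_replicate ha]
      · rw [Multiset.eq_of_mem_replicate ha]; omega
  simpa using Multiset.card_le_card hsub

lemma card_filter_degSeqMS_le {n j s b : ℕ} (c : Fin s → ℕ) (hb : ∀ t, c t + j - 1 ≤ b) :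
    Multiset.card ((degSeqMS n j c).filter (b < ·)) ≤ j := by
  have hnoncomplete : (∑ t, Multiset.replicate (c t) (c t + j - 1)).filter (b < ·) = 0 := by
    refine Multiset.filter_eq_nil.mpr fun a ha => ?_
    obtain ⟨t, -, hat⟩ := Multiset.mem_sum.mp ha
    rw [Multiset.eq_of_mem_replicate hat]
    exact not_lt.mpr (hb t)
  rw [degSeqMS, Multiset.filter_add, hnoncomplete, zero_add]
  simpa using Multiset.card_le_card (Multiset.filter_le (b < ·) (Multiset.replicate j (n - 1)))

lemma le_sortedNth_degSeqMS {n j s : ℕ} (c : Fin s → ℕ) (hn : (∑ t, c t) + j = n) (t : Fin s)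
    {l : ℕ} (hl : n ≤ l + (c t + j)) (hln : l < n) :
    c t + j - 1 ≤ sortedNth (degSeqMS n j c) l := by
  have hcard : Multiset.card (degSeqMS n j c) = n := by rw [card_degSeqMS, hn]
  have hct : c t + j ≤ n := hn ▸ Nat.add_le_add_right
    (Finset.single_le_sum (fun _ _ => Nat.zero_le _) (Finset.mem_univ t)) j
  have hmono : Monotone (c t + j - 1 ≤ ·) := fun _ _ hxy h => h.trans hxy
  rw [hmono.apply_sortedNth_iff_le_card_filter (by omega), hcard]
  have := add_le_card_filter_degSeqMS c t hct
  omega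

lemma sortedNth_degSeqMS_le {n j s b : ℕ} (c : Fin s → ℕ) (hn : (∑ t, c t) + j = n)
    (hb : ∀ t, c t + j - 1 ≤ b) {l : ℕ} (hl : l + j < n) :
    sortedNth (degSeqMS n j c) l ≤ b := by
  have hcard : Multiset.card (degSeqMS n j c) = n := by rw [card_degSeqMS, hn]
  have hmono : Monotone (b < ·) := fun _ _ hxy h => h.trans_le hxy
  by_contra! hlt
  rw [hmono.apply_sortedNth_iff_le_card_filter (by omega), hcard] at hlt
  have := card_filter_degSeqMS_le (n := n) c hb
  omega

lemma apply_add_card_sub_one_le_sum {ι : Type*} [Fintype ι] (c : ι → ℕ) (hc : ∀ t, 1 ≤ c t)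
    (t : ι) : c t + (Fintype.card ι - 1) ≤ ∑ x, c x := by
  classical
  rw [← Finset.add_sum_erase _ _ (Finset.mem_univ t)]
  gcongr
  simpa [Finset.card_erase_of_mem] using
    Finset.card_nsmul_le_sum (Finset.univ.erase t) c 1 fun x _ => hc x

theorem stmt13_general (k m : ℕ) (n : ℕ) (hn : n = m * (k + 1))
    (j : ℕ)
    (c : Fin (k * j + 1) → ℕ)
    (hsum : (∑ i, c i) = n - j)
    -- the largest noncomplete degree `d = c_{kj+1} + j - 1` satisfies `d ≥ n - k(j+1)`
    (hd : n - k * (j + 1) ≤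
      c ⟨k * j, Nat.lt_succ_self _⟩ + j - 1) :
    ∀ i : ℕ, j + 1 ≤ i → ∀ c' : Fin (k * i + 1) → ℕ,
      (∀ l, 1 ≤ c' l) → (∑ l, c' l) = n - i →
      ¬ (∀ l : ℕ, sortedNth (degSeqMS n j c) l ≤ sortedNth (degSeqMS n i c') l) := by
  intro i hi c' hc' hsum' hmaj
  have hnm : n = k * m + m := by rw [hn]; ring
  have hc'_le : ∀ t, c' t + k * i ≤ ∑ l, c' l := by
    simpa using apply_add_card_sub_one_le_sum c' hc'
  have him : i < m := by
    by_contra! hmi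
    have := Nat.mul_le_mul_left k hmi
    have := hc'_le 0
    have := hc' 0
    omega
  have hkj : k * (j + 1) ≤ k * i := Nat.mul_le_mul_left k hi
  have hkm : k * i ≤ k * m := Nat.mul_le_mul_left k him.le
  have hlow : c ⟨k * j, _⟩ + j - 1 ≤ sortedNth (degSeqMS n j c) (n - i - 1) :=
    le_sortedNth_degSeqMS c (by omega) _ (by omega) (by omega)
  have hhigh : sortedNth (degSeqMS n i c') (n - i - 1) ≤ n - k * i - 1 :=
    sortedNth_degSeqMS_le c' (by omega) (fun t => by have := hc'_le t; omega) (by omega)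
  have := hmaj (n - i - 1)
  omega

theorem stmt13 (k m : ℕ) (hk : 2 ≤ k) (hm : 2 ≤ m) (n : ℕ) (hn : n = m * (k + 1))
    (j : ℕ) (hj1 : 1 ≤ j) (hjm : j ≤ m - 1)
    (c : Fin (k * j + 1) → ℕ) (hc : ∀ i, 1 ≤ c i) (hmc : Monotone c)
    (hsum : (∑ i, c i) = n - j)
    -- the largest noncomplete degree `d = c_{kj+1} + j - 1` satisfies `d ≥ n - k(j+1)`
    (hd : n - k * (j + 1) ≤
      c ⟨k * j, Nat.lt_succ_self _⟩ + j - 1) :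
    ∀ i : ℕ, j + 1 ≤ i → ∀ c' : Fin (k * i + 1) → ℕ,
      (∀ l, 1 ≤ c' l) → (∑ l, c' l) = n - i →
      ¬ (∀ l : ℕ, sortedNth (degSeqMS n j c) l ≤ sortedNth (degSeqMS n i c') l) :=
  stmt13_general k m n hn j c hsum hd
end
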